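/- arXiv:0912.1629 — 6 statements merged into one kernel-verified Lean document; each statement's English description precedes it below -/
import Mathlib

section
/- Homological perturbation lemma (operator form). Let R be a commutative ring, L and M R-modules, b_L an R-linear endomorphism of L with b_L ∘ b_L = 0, and b, h R-linear endomorphisms of M with b ∘ b = 0. Let p : M → L and ι : L → M be R-linear maps satisfying p ∘ b = b_L ∘ p, b ∘ ι = ι ∘ b_L, p ∘ ι = id_L, and ι ∘ p = id_M + b ∘ h + h ∘ b. Let μ be an R-linear endomorphism of M such that (b + μ) ∘ (b + μ) = 0 and μ ∘ h is nilpotent, and suppose moreover that p ∘ h = 0 and p ∘ μ = 0. Since μ ∘ h is nilpotent, id_M − μ ∘ h is invertible; set A = (id_M − μ ∘ h)⁻¹ ∘ μ, ι_∞ = ι + h ∘ A ∘ ι, and h_∞ = h + h ∘ A ∘ h. Then: (i) p ∘ (b + μ) = b_L ∘ p; (ii) (b + μ) ∘ ι_∞ = ι_∞ ∘ b_L; (iii) p ∘ ι_∞ = id_L; (iv) ι_∞ ∘ p = id_M + (b + μ) ∘ h_∞ + h_∞ ∘ (b + μ). -/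
/-!
By Jacobson's lemma `1 - hμ` is invertible with inverse `w = 1 + hA`, and `ι∞ = w ι`,
`h∞ = w h`. Since `b² = (b + μ)² = 0`, the defect `(1 - hμ)(b + μ) - b(1 - hμ)` equals
`(1 + bh + hb) μ = ιpμ = 0`, so `w` is a chain isomorphism `(M, b) → (M, b + μ)`; it is fixed by
`p` because `p h = 0`. Transporting `(p, ι, h)` along `w` gives the first three identities, and
the homotopy identity follows from `w = 1 + w h μ`.
-/

section Ring

variable {S : Type*} [Ring S]

theorem one_sub_mul_mul_one_add_mul_inverse_mul {h μ : S} (hu : IsUnit (1 - μ * h)) :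
    (1 - h * μ) * (1 + h * (Ring.inverse (1 - μ * h) * μ)) = 1 :=
  calc _ = 1 - h * μ + h * ((1 - μ * h) * Ring.inverse (1 - μ * h)) * μ := by noncomm_ring
    _ = 1 := by rw [Ring.mul_inverse_cancel _ hu]; noncomm_ring

theorem one_add_mul_inverse_mul_mul_one_sub_mul {h μ : S} (hu : IsUnit (1 - μ * h)) :
    (1 + h * (Ring.inverse (1 - μ * h) * μ)) * (1 - h * μ) = 1 :=
  calc _ = 1 - h * μ + h * (Ring.inverse (1 - μ * h) * (1 - μ * h)) * μ := by noncomm_ring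
    _ = 1 := by rw [Ring.inverse_mul_cancel _ hu]; noncomm_ring

theorem semiconjBy_one_sub_mul_add {b h μ : S} (hb : b * b = 0) (hsq : (b + μ) * (b + μ) = 0)
    (hμ : (1 + b * h + h * b) * μ = 0) : SemiconjBy (1 - h * μ) (b + μ) b := by
  have hdefect : (1 - h * μ) * (b + μ) - b * (1 - h * μ) =
      (1 + b * h + h * b) * μ - h * ((b + μ) * (b + μ) - b * b) := by noncomm_ring
  rw [hμ, hsq, hb, sub_zero, mul_zero, sub_zero] at hdefect
  exact sub_eq_zero.mp hdefect

theorem mul_one_add_mul_add_mul_eq {b h μ w : S} (hwv : w * (1 - h * μ) = 1)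
    (hw : (b + μ) * w = w * b) :
    w * (1 + b * h + h * b) = 1 + (b + μ) * (w * h) + w * h * (b + μ) :=
  calc _ = w * (1 - h * μ) + w * b * h + w * h * (b + μ) := by noncomm_ring
    _ = _ := by rw [hwv, ← mul_assoc, hw]

end Ring

theorem LinearMap.comp_one_add_mul_eq_self {R M N : Type*} [Semiring R] [AddCommMonoid M]
    [AddCommMonoid N] [Module R M] [Module R N] {p : M →ₗ[R] N} {h : Module.End R M}
    (hph : p ∘ₗ h = 0) (x : Module.End R M) : p ∘ₗ (1 + h * x) = p := by
  rw [LinearMap.comp_add, Module.End.mul_eq_comp, ← LinearMap.comp_assoc, hph,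
    LinearMap.zero_comp, add_zero, Module.End.one_eq_id, LinearMap.comp_id]

theorem homological_perturbation_lemma_general
    {R L M : Type*} [CommRing R] [AddCommGroup L] [AddCommGroup M]
    [Module R L] [Module R M]
    (bL : Module.End R L)
    (b h μ : Module.End R M) (hb : b * b = 0)
    (p : M →ₗ[R] L) (ι : L →ₗ[R] M)
    (hpb : p ∘ₗ b = bL ∘ₗ p)
    (hbι : b ∘ₗ ι = ι ∘ₗ bL)
    (hpι : p ∘ₗ ι = (LinearMap.id : L →ₗ[R] L))
    (hιp : (ι ∘ₗ p : Module.End R M) = 1 + b * h + h * b)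
    (hsq : (b + μ) * (b + μ) = 0)
    (hnil : IsNilpotent (μ * h))
    (hph : p ∘ₗ h = 0) (hpμ : p ∘ₗ μ = 0)
    (A : Module.End R M) (hA : A = Ring.inverse (1 - μ * h) * μ)
    (ιinf : L →ₗ[R] M) (hιinf : ιinf = ι + (h * A) ∘ₗ ι)
    (hinf : Module.End R M) (hhinf : hinf = h + h * A * h) :
    p ∘ₗ (b + μ) = bL ∘ₗ p ∧
    (b + μ) ∘ₗ ιinf = ιinf ∘ₗ bL ∧
    p ∘ₗ ιinf = (LinearMap.id : L →ₗ[R] L) ∧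
    (ιinf ∘ₗ p : Module.End R M) = 1 + (b + μ) * hinf + hinf * (b + μ) := by
  have hu : IsUnit (1 - μ * h) := hnil.isUnit_one_sub
  let v : (Module.End R M)ˣ := ⟨1 - h * μ, 1 + h * A,
    hA ▸ one_sub_mul_mul_one_add_mul_inverse_mul hu,
    hA ▸ one_add_mul_inverse_mul_mul_one_sub_mul hu⟩
  have hιpμ : (1 + b * h + h * b) * μ = 0 := by
    rw [← hιp, Module.End.mul_eq_comp, LinearMap.comp_assoc, hpμ, LinearMap.comp_zero]
  have hconj : (b + μ) * ↑v⁻¹ = ↑v⁻¹ * b :=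
    ((semiconjBy_one_sub_mul_add hb hsq hιpμ).units_inv_symm_left (a := v)).eq.symm
  have hιinf_eq : ιinf = (↑v⁻¹ : Module.End R M) ∘ₗ ι := by
    rw [hιinf, Units.inv_mk, LinearMap.add_comp, Module.End.one_eq_id, LinearMap.id_comp]
  have hhinf_eq : hinf = ↑v⁻¹ * h := by rw [hhinf, Units.inv_mk]; noncomm_ring
  have hp_inv : p ∘ₗ ↑v⁻¹ = p := LinearMap.comp_one_add_mul_eq_self hph A
  subst hιinf_eq hhinf_eq
  refine ⟨by rw [LinearMap.comp_add, hpμ, add_zero, hpb], ?_,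
    by rw [← LinearMap.comp_assoc, hp_inv, hpι], ?_⟩
  · rw [← LinearMap.comp_assoc, ← Module.End.mul_eq_comp, hconj, Module.End.mul_eq_comp,
      LinearMap.comp_assoc, hbι, LinearMap.comp_assoc]
  · rw [LinearMap.comp_assoc, ← Module.End.mul_eq_comp, hιp]
    exact mul_one_add_mul_add_mul_eq v.inv_mul hconj

/-- **Homological perturbation lemma (operator form).**
Given a deformation retract datum `(p, ι, h)` between `(L, bL)` and `(M, b)` and a
small perturbation `μ` of `b` with `p ∘ h = 0` and `p ∘ μ = 0`, setting
`A = (1 - μh)⁻¹ μ`, `ι∞ = ι + h A ι` and `h∞ = h + h A h`, we obtain a deformation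
retract datum `(p, ι∞, h∞)` between `(L, bL)` and `(M, b + μ)`. -/
theorem homological_perturbation_lemma
    {R L M : Type*} [CommRing R] [AddCommGroup L] [AddCommGroup M]
    [Module R L] [Module R M]
    (bL : Module.End R L) (hbL : bL * bL = 0)
    (b h μ : Module.End R M) (hb : b * b = 0)
    (p : M →ₗ[R] L) (ι : L →ₗ[R] M)
    (hpb : p ∘ₗ b = bL ∘ₗ p)
    (hbι : b ∘ₗ ι = ι ∘ₗ bL)
    (hpι : p ∘ₗ ι = (LinearMap.id : L →ₗ[R] L))
    (hιp : (ι ∘ₗ p : Module.End R M) = 1 + b * h + h * b)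
    (hsq : (b + μ) * (b + μ) = 0)
    (hnil : IsNilpotent (μ * h))
    (hph : p ∘ₗ h = 0) (hpμ : p ∘ₗ μ = 0)
    (A : Module.End R M) (hA : A = Ring.inverse (1 - μ * h) * μ)
    (ιinf : L →ₗ[R] M) (hιinf : ιinf = ι + (h * A) ∘ₗ ι)
    (hinf : Module.End R M) (hhinf : hinf = h + h * A * h) :
    p ∘ₗ (b + μ) = bL ∘ₗ p ∧
    (b + μ) ∘ₗ ιinf = ιinf ∘ₗ bL ∧
    p ∘ₗ ιinf = (LinearMap.id : L →ₗ[R] L) ∧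
    (ιinf ∘ₗ p : Module.End R M) = 1 + (b + μ) * hinf + hinf * (b + μ) :=
  homological_perturbation_lemma_general bL b h μ hb p ι hpb hbι hpι hιp hsq hnil hph hpμ A hA ιinf
    hιinf hinf hhinf
end

section
/- Let (A, 𝔪) be a Cohen–Macaulay Noetherian local ring of Krull dimension d > 0 which is an algebra over an infinite field K, and let u₁, …, u_m be elements of A generating an ideal whose radical is 𝔪. Then there exist b₁, …, b_m ∈ K such that the element y = b₁·u₁ + ⋯ + b_m·u_m (where each b_j acts via the algebra map K → A) is a regular element of A, i.e. a non-zerodivisor. -/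
section AuxAssociatedPrimes

variable {R : Type*} [CommRing R] {M : Type*} [AddCommGroup M] [Module R M]

lemma assoc_subset_union [IsNoetherianRing R] (N : Submodule R M) :
    associatedPrimes R M ⊆
      associatedPrimes R N ∪ associatedPrimes R (M ⧸ N) := by
  intro p hp'
  obtain ⟨hp, x, hx⟩ := (isAssociatedPrime_iff (M := M)).mp hp'
  by_cases h : ∃ a : R, a • x ∈ N ∧ a • x ≠ 0
  · obtain ⟨a, haN, ha0⟩ := h
    left
    have hanp : a ∉ p := by
      intro hap
      rw [hx, Submodule.mem_colon_singleton, Submodule.mem_bot] at hap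
      exact ha0 hap
    refine isAssociatedPrime_iff.mpr ⟨hp, ⟨a • x, haN⟩, ?_⟩
    ext c
    rw [Submodule.mem_colon_singleton, Submodule.mem_bot]
    have : c • (⟨a • x, haN⟩ : N) = 0 ↔ c • (a • x) = 0 := by
      constructor
      · intro h'; exact congrArg Subtype.val h'
      · intro h'; exact Subtype.ext h'
    rw [this, smul_smul]
    constructor
    · intro hc
      have hca : c * a ∈ p := Ideal.mul_mem_right _ _ hc
      rwa [hx, Submodule.mem_colon_singleton, Submodule.mem_bot] at hca
    · intro hc
      have hca : c * a ∈ p := by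
        rw [hx, Submodule.mem_colon_singleton, Submodule.mem_bot]
        exact hc
      rcases hp.mem_or_mem hca with h' | h'
      · exact h'
      · exact absurd h' hanp
  · push_neg at h
    right
    refine isAssociatedPrime_iff.mpr ⟨hp, N.mkQ x, ?_⟩
    ext c
    rw [Submodule.mem_colon_singleton, Submodule.mem_bot, ← map_smul,
      ← LinearMap.mem_ker, Submodule.ker_mkQ]
    constructor
    · intro hc
      have : c • x = 0 := by
        rw [hx, Submodule.mem_colon_singleton, Submodule.mem_bot] at hc
        exact hc
      rw [this]; exact N.zero_mem
    · intro hc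
      rw [hx, Submodule.mem_colon_singleton, Submodule.mem_bot]
      exact h c hc

lemma assoc_finite_quot [IsNoetherianRing R] [IsNoetherian R M] (N : Submodule R M) :
    (associatedPrimes R (M ⧸ N)).Finite := by
  induction N using IsNoetherian.induction with
  | _ N IH =>
    by_cases hs : Subsingleton (M ⧸ N)
    · rw [associatedPrimes.eq_empty_of_subsingleton]
      exact Set.finite_empty
    · have : Nontrivial (M ⧸ N) := not_subsingleton_iff_nontrivial.mp hs
      obtain ⟨p, hp⟩ := associatedPrimes.nonempty R (M ⧸ N)
      obtain ⟨hpp, xb, hxb⟩ := isAssociatedPrime_iff.mp hp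
      have hxb0 : xb ≠ 0 := by
        rintro rfl
        apply hpp.ne_top
        rw [hxb, Submodule.colon_singleton_zero]
      obtain ⟨x, rfl⟩ := N.mkQ_surjective xb
      set N' : Submodule R M := N ⊔ Submodule.span R {x} with hN'
      have hNN' : N < N' := by
        refine lt_of_le_of_ne le_sup_left ?_
        intro h
        apply hxb0
        rw [← LinearMap.mem_ker, Submodule.ker_mkQ, h]
        exact Submodule.mem_sup_right (Submodule.mem_span_singleton_self x)
      have hmap : N'.map N.mkQ = Submodule.span R {N.mkQ x} := by
        rw [hN', Submodule.map_sup, Submodule.map_span, Set.image_singleton]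
        have : N.map N.mkQ = ⊥ := by
          rw [Submodule.eq_bot_iff]
          rintro y ⟨z, hz, rfl⟩
          rwa [← LinearMap.mem_ker, Submodule.ker_mkQ]
        rw [this, bot_sup_eq]
      have hsub := assoc_subset_union (R := R) (M := M ⧸ N) (N'.map N.mkQ)
      have e1 : ((M ⧸ N) ⧸ (N'.map N.mkQ)) ≃ₗ[R] M ⧸ N' :=
        Submodule.quotientQuotientEquivQuotient N N' le_sup_left
      have hQ : associatedPrimes R ((M ⧸ N) ⧸ (N'.map N.mkQ)) = associatedPrimes R (M ⧸ N') :=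
        LinearEquiv.AssociatedPrimes.eq e1
      -- span singleton ≃ R ⧸ p
      have hker : LinearMap.ker (LinearMap.toSpanSingleton R (M ⧸ N) (N.mkQ x)) = p := by
        ext c
        rw [LinearMap.mem_ker, hxb, Submodule.mem_colon_singleton, Submodule.mem_bot,
          LinearMap.toSpanSingleton_apply]
      have e2 : (R ⧸ p) ≃ₗ[R] (N'.map N.mkQ : Submodule R (M ⧸ N)) := by
        rw [hmap]
        exact (Submodule.quotEquivOfEq p
            (LinearMap.ker (LinearMap.toSpanSingleton R (M ⧸ N) (N.mkQ x))) hker.symm).trans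
          ((LinearMap.toSpanSingleton R (M ⧸ N) (N.mkQ x)).quotKerEquivRange.trans
            (LinearEquiv.ofEq _ _
              (LinearMap.span_singleton_eq_range R (M ⧸ N) (N.mkQ x)).symm))
      have hsingle : associatedPrimes R (N'.map N.mkQ : Submodule R (M ⧸ N)) = {p} := by
        rw [← LinearEquiv.AssociatedPrimes.eq e2,
          associatedPrimes.eq_singleton_of_isPrimary (hpp.isPrimary), hpp.radical]
      refine Set.Finite.subset ?_ hsub
      rw [hsingle, hQ]
      exact (Set.finite_singleton p).union (IH N' hNN')

lemma assoc_finite [IsNoetherianRing R] [IsNoetherian R M] :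
    (associatedPrimes R M).Finite := by
  have e : (M ⧸ (⊥ : Submodule R M)) ≃ₗ[R] M := Submodule.quotEquivOfEqBot ⊥ rfl
  rw [← LinearEquiv.AssociatedPrimes.eq e]
  exact assoc_finite_quot ⊥

end AuxAssociatedPrimes



/-- A Noetherian local ring is Cohen–Macaulay if it admits a regular sequence of
length equal to its Krull dimension consisting of elements of the maximal ideal. -/
def IsCohenMacaulayLocalRing (A : Type*) [CommRing A] [IsLocalRing A] : Prop :=
  ∃ rs : List A, (∀ x ∈ rs, x ∈ IsLocalRing.maximalIdeal A) ∧
    RingTheory.Sequence.IsRegular A rs ∧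
    (rs.length : WithBot (WithTop ℕ)) = ringKrullDim A

/-- **Existence of a regular linear combination.**
Let `(A, 𝔪)` be a Cohen–Macaulay Noetherian local ring of dimension `d > 0` which is an
algebra over an infinite field `K`, and let `u₁, …, u_m` generate an ideal whose radical
is `𝔪`.  Then some `K`-linear combination of the `u_j` is a non-zerodivisor of `A`. -/
theorem exists_regular_linear_combination
    {K A : Type*} [Field K] [Infinite K] [CommRing A] [IsNoetherianRing A]
    [IsLocalRing A] [Algebra K A]
    {d : ℕ} (hd : 0 < d) (hdim : ringKrullDim A = d)
    (hCM : IsCohenMacaulayLocalRing A)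
    {m : ℕ} (u : Fin m → A)
    (hu : (Ideal.span (Set.range u)).radical = IsLocalRing.maximalIdeal A) :
    ∃ b : Fin m → K,
      ∀ a : A, (∑ j, algebraMap K A (b j) * u j) * a = 0 → a = 0 := by
  classical
  obtain ⟨rs, hmem, hreg, hlen⟩ := hCM
  -- rs is nonempty
  have hne : rs ≠ [] := by
    rintro rfl
    rw [hdim] at hlen
    simp only [List.length_nil, Nat.cast_zero] at hlen
    norm_cast at hlen
    exact absurd hlen (fun h => hd.ne (WithTop.coe_injective (WithBot.coe_injective h)))
  obtain ⟨x, t, rfl⟩ := List.exists_cons_of_ne_nil hne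
  have hxreg : IsSMulRegular A x :=
    ((RingTheory.Sequence.isRegular_cons_iff A x t).mp hreg).1
  have hxm : x ∈ IsLocalRing.maximalIdeal A := hmem x List.mem_cons_self
  -- every associated prime avoids some u j
  have key : ∀ p ∈ associatedPrimes A A, ∃ j, u j ∉ p := by
    intro p hp
    obtain ⟨hpp, a, ha⟩ := isAssociatedPrime_iff.mp hp
    have hxp : x ∉ p := by
      intro hxp
      rw [ha, Submodule.mem_colon_singleton, Submodule.mem_bot] at hxp
      have : a = 0 := hxreg (show x • a = x • 0 by rw [hxp, smul_zero])
      apply hpp.ne_top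
      rw [ha, this, Submodule.colon_singleton_zero]
    by_contra h
    push_neg at h
    have hspan : Ideal.span (Set.range u) ≤ p := by
      rw [Ideal.span_le]
      rintro _ ⟨j, rfl⟩
      exact h j
    have : (Ideal.span (Set.range u)).radical ≤ p := by
      rw [← hpp.radical]
      exact Ideal.radical_mono hspan
    rw [hu] at this
    exact hxp (this hxm)
  -- the linear map
  let φ : (Fin m → K) →ₗ[K] A :=
    LinearMap.lsum K (fun _ : Fin m => K) K fun j => LinearMap.toSpanSingleton K A (u j)
  have hφ : ∀ b : Fin m → K, φ b = ∑ j, algebraMap K A (b j) * u j := by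
    intro b
    simp [φ, LinearMap.lsum_apply, LinearMap.toSpanSingleton_apply, Algebra.smul_def]
  have hfin : (associatedPrimes A A).Finite := assoc_finite
  -- the proper subspaces
  set s : Finset (Submodule K (Fin m → K)) :=
    hfin.toFinset.image (fun p => (p.restrictScalars K).comap φ) with hs
  have htop : ⊤ ∉ s := by
    rw [hs]
    simp only [Finset.mem_image, Set.Finite.mem_toFinset]
    rintro ⟨p, hp, hptop⟩
    obtain ⟨j, hj⟩ := key p hp
    apply hj
    have : Pi.single j (1 : K) ∈ (Submodule.comap φ (p.restrictScalars K)) := by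
      rw [hptop]; trivial
    rw [Submodule.mem_comap, Submodule.restrictScalars_mem, hφ] at this
    simpa [Pi.single_apply, Finset.sum_ite_eq'] using this
  have hcover := Subspace.biUnion_ne_univ_of_top_notMem htop
  rw [Ne, Set.eq_univ_iff_forall] at hcover
  push_neg at hcover
  obtain ⟨b, hb⟩ := hcover
  simp only [Set.mem_iUnion, not_exists] at hb
  refine ⟨b, fun a hab => ?_⟩
  by_contra ha0
  have : φ b ∈ ⋃ p ∈ associatedPrimes A A, (p : Set A) := by
    rw [biUnion_associatedPrimes_eq_zero_divisors]
    exact ⟨a, ha0, by rw [smul_eq_mul, hφ]; exact hab⟩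
  rw [Set.mem_iUnion₂] at this
  obtain ⟨p, hp, hbp⟩ := this
  have hmemS : (p.restrictScalars K).comap φ ∈ s := by
    rw [hs]
    exact Finset.mem_image.mpr ⟨p, hfin.mem_toFinset.mpr hp, rfl⟩
  exact hb _ hmemS hbp
end

section
/- Let S be a commutative ring, W ∈ S, and let X⁰, X¹ be S-modules together with S-linear maps d⁰ : X⁰ → X¹ and d¹ : X¹ → X⁰ satisfying d¹ ∘ d⁰ = W • id_{X⁰} and d⁰ ∘ d¹ = W • id_{X¹}. Assume that W acts regularly on X⁰ (i.e. W • x = 0 implies x = 0 for x ∈ X⁰). Then for every x ∈ X⁰ and z ∈ X¹ with d⁰(x) = W • z, one has x = d¹(z). In particular, every element of X⁰ whose image under d⁰ lies in W·X¹ belongs to the image of d¹, so the two-periodic complex of S/(W)-modules obtained by reducing d⁰ and d¹ modulo W is exact at X⁰ ⊗_S S/(W). -/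
theorem matrix_factorisation_periodification_exact_general
    {S : Type*} [CommRing S] (W : S)
    {X0 X1 : Type*} [AddCommGroup X0] [AddCommGroup X1]
    [Module S X0] [Module S X1]
    (d0 : X0 →ₗ[S] X1) (d1 : X1 →ₗ[S] X0)
    (h10 : d1 ∘ₗ d0 = W • (LinearMap.id : X0 →ₗ[S] X0))
    (hreg : ∀ x : X0, W • x = 0 → x = 0) :
    ∀ (x : X0) (z : X1), d0 x = W • z → x = d1 z := by
  intro x z h
  refine IsSMulRegular.of_right_eq_zero_of_smul hreg ?_
  calc W • x = d1 (d0 x) := (LinearMap.congr_fun h10 x).symm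
    _ = W • d1 z := by rw [h, map_smul]

/-- **Acyclicity of the periodification of a matrix factorisation.**
If `d⁰ : X⁰ → X¹` and `d¹ : X¹ → X⁰` satisfy `d¹ ∘ d⁰ = W • id` and
`d⁰ ∘ d¹ = W • id`, and `W` acts regularly on `X⁰`, then any `x ∈ X⁰` with
`d⁰ x = W • z` satisfies `x = d¹ z`; in particular every element of `X⁰`
whose image under `d⁰` lies in `W · X¹` is in the image of `d¹`. -/
theorem matrix_factorisation_periodification_exact
    {S : Type*} [CommRing S] (W : S)
    {X0 X1 : Type*} [AddCommGroup X0] [AddCommGroup X1]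
    [Module S X0] [Module S X1]
    (d0 : X0 →ₗ[S] X1) (d1 : X1 →ₗ[S] X0)
    (h10 : d1 ∘ₗ d0 = W • (LinearMap.id : X0 →ₗ[S] X0))
    (h01 : d0 ∘ₗ d1 = W • (LinearMap.id : X1 →ₗ[S] X1))
    (hreg : ∀ x : X0, W • x = 0 → x = 0) :
    ∀ (x : X0) (z : X1), d0 x = W • z → x = d1 z :=
  matrix_factorisation_periodification_exact_general W d0 d1 h10 hreg
end

section
/- Let R be a commutative ring, T a ℤ-indexed acyclic cochain complex of finitely generated free R-modules, and J an R-module of finite projective dimension. Then the complex T ⊗_R J, obtained by applying the functor − ⊗_R J to T degreewise, is acyclic. -/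
open CategoryTheory CategoryTheory.Limits CategoryTheory.MonoidalCategory

/-- A module has finite projective dimension if it admits a projective resolution
which vanishes in all sufficiently high degrees. -/
def HasFiniteProjectiveDimension {R : Type u} [Ring R] (J : ModuleCat.{u} R) : Prop :=
  ∃ (P : ProjectiveResolution J) (n : ℕ), ∀ i : ℕ, n < i → IsZero (P.complex.X i)

/-!
Tensoring with a flat module preserves exactness, so `T ⊗ P` is acyclic for flat `P`.
For a short exact sequence `0 → A → P → C → 0` with `P` flat, degreewise flatness of `T` makes
`0 → T ⊗ A → T ⊗ P → T ⊗ C → 0` short exact, and the long exact homology sequence embeds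
`H^i(T ⊗ C)` into `H^{i+1}(T ⊗ A)`. Along a projective resolution `P` of `J` vanishing above
degree `n`, the syzygies `im (P_{k+1} → P_k)` are zero for `k ≥ n`, so descending induction over
the sequences `0 → im d_{k+2} → P_{k+1} → im d_{k+1} → 0` and finally
`0 → im d_1 → P_0 → J → 0` shows that `T ⊗ J` is acyclic.
-/

variable {R : Type u} [CommRing R]

namespace CategoryTheory.ShortComplex

noncomputable def moduleCatImages (S : ShortComplex (ModuleCat.{u} R)) :
    ShortComplex (ModuleCat.{u} R) where
  f := ModuleCat.ofHom (LinearMap.range S.f.hom).subtype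
  g := ModuleCat.ofHom S.g.hom.rangeRestrict
  zero := by
    ext ⟨_, x, rfl⟩
    simp

lemma Exact.moduleCatImages_shortExact {S : ShortComplex (ModuleCat.{u} R)} (hS : S.Exact) :
    S.moduleCatImages.ShortExact := by
  rw [ShortExact.moduleCat_exact_iff_function_exact] at hS
  have hexact : Function.Exact (LinearMap.range S.f.hom).subtype S.g.hom.rangeRestrict := fun x ↦ by
    rw [← LinearMap.mem_ker, LinearMap.ker_rangeRestrict, LinearMap.mem_ker, Submodule.coe_subtype,
      Subtype.range_coe]
    exact hS x
  exact ModuleCat.shortComplex_shortExact _ hexact Subtype.val_injective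
    S.g.hom.surjective_rangeRestrict

end CategoryTheory.ShortComplex

lemma CategoryTheory.ProjectiveResolution.flat_X {J : ModuleCat.{u} R} (P : ProjectiveResolution J)
    (k : ℕ) : Module.Flat R (P.complex.X k) :=
  have := (IsProjective.iff_projective (P.complex.X k)).2 (P.projective k)
  inferInstance

section TensorRight

variable {ι : Type*} {c : ComplexShape ι}

lemma exactAt_tensorRight_of_flat {K : HomologicalComplex (ModuleCat.{u} R) c} {j : ι}
    (hK : K.ExactAt j) (M : ModuleCat.{u} R) [Module.Flat R M] :
    (((tensorRight M).mapHomologicalComplex c).obj K).ExactAt j := by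
  rw [HomologicalComplex.exactAt_iff, ShortComplex.ShortExact.moduleCat_exact_iff_function_exact]
    at hK ⊢
  exact Module.Flat.rTensor_exact M hK

lemma acyclic_tensorRight_of_iso {K : HomologicalComplex (ModuleCat.{u} R) c}
    {M M' : ModuleCat.{u} R} (e : M ≅ M')
    (h : (((tensorRight M).mapHomologicalComplex c).obj K).Acyclic) :
    (((tensorRight M').mapHomologicalComplex c).obj K).Acyclic := fun i ↦
  (h i).of_iso ((NatIso.mapHomologicalComplex ((tensoringRight _).mapIso e) c).app K)

noncomputable def tensorRightShortComplex (K : HomologicalComplex (ModuleCat.{u} R) c)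
    (S : ShortComplex (ModuleCat.{u} R)) : ShortComplex (HomologicalComplex (ModuleCat.{u} R) c) :=
  ShortComplex.mk
    ((NatTrans.mapHomologicalComplex ((tensoringRight _).map S.f) c).app K)
    ((NatTrans.mapHomologicalComplex ((tensoringRight _).map S.g) c).app K)
    (by
      ext i : 1
      change K.X i ◁ S.f ≫ K.X i ◁ S.g = 0
      rw [← whiskerLeft_comp, S.zero, MonoidalPreadditive.whiskerLeft_zero])

lemma tensorRightShortComplex_shortExact {K : HomologicalComplex (ModuleCat.{u} R) c}
    (hK : ∀ i, Module.Flat R (K.X i)) {S : ShortComplex (ModuleCat.{u} R)} (hS : S.ShortExact) :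
    (tensorRightShortComplex K S).ShortExact := by
  refine HomologicalComplex.shortExact_of_degreewise_shortExact _ fun i ↦ ?_
  refine ModuleCat.shortComplex_shortExact _ ?_ ?_ ?_
  · exact lTensor_exact (K.X i)
      ((ShortComplex.ShortExact.moduleCat_exact_iff_function_exact _).1 hS.exact)
      hS.moduleCat_surjective_g
  · exact Module.Flat.lTensor_preserves_injective_linearMap _ hS.moduleCat_injective_f
  · exact LinearMap.lTensor_surjective _ hS.moduleCat_surjective_g

end TensorRight

lemma acyclic_tensorRight_X₃ {T : CochainComplex (ModuleCat.{u} R) ℤ} (hT : T.Acyclic)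
    (hflat : ∀ i, Module.Flat R (T.X i)) {S : ShortComplex (ModuleCat.{u} R)} (hS : S.ShortExact)
    (hX₂ : Module.Flat R S.X₂)
    (hX₁ : (((tensorRight S.X₁).mapHomologicalComplex _).obj T).Acyclic) :
    (((tensorRight S.X₃).mapHomologicalComplex _).obj T).Acyclic := by
  intro i
  rw [HomologicalComplex.exactAt_iff_isZero_homology]
  exact ((tensorRightShortComplex_shortExact hflat hS).homology_exact₃ i (i + 1) rfl).isZero_X₂
    ((exactAt_tensorRight_of_flat (hT i) S.X₂).isZero_homology.eq_of_src _ _)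
    ((hX₁ (i + 1)).isZero_homology.eq_of_tgt _ _)

lemma acyclic_tensorRight_range_d {T : CochainComplex (ModuleCat.{u} R) ℤ} (hT : T.Acyclic)
    (hflat : ∀ i, Module.Flat R (T.X i)) {J : ModuleCat.{u} R} (P : ProjectiveResolution J)
    {n : ℕ} (hn : ∀ i, n < i → IsZero (P.complex.X i)) (k : ℕ) :
    (((tensorRight (ModuleCat.of R (LinearMap.range (P.complex.d (k + 1) k).hom))
      ).mapHomologicalComplex _).obj T).Acyclic := by
  induction hm : n - k generalizing k with
  | zero =>
    have : Subsingleton (P.complex.X (k + 1)) := ModuleCat.subsingleton_of_isZero (hn _ (by omega))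
    have : Subsingleton (LinearMap.range (P.complex.d (k + 1) k).hom) :=
      (P.complex.d (k + 1) k).hom.surjective_rangeRestrict.subsingleton
    have := Module.Free.of_subsingleton R (LinearMap.range (P.complex.d (k + 1) k).hom)
    exact fun i ↦ exactAt_tensorRight_of_flat (hT i) _
  | succ m ih =>
    exact (acyclic_tensorRight_X₃ hT hflat (P.exact_succ k).moduleCatImages_shortExact
      (P.flat_X (k + 1)) (ih (k + 1) (by omega)) :)

lemma acyclic_tensorRight_of_projectiveResolution {T : CochainComplex (ModuleCat.{u} R) ℤ}
    (hT : T.Acyclic) (hflat : ∀ i, Module.Flat R (T.X i)) {J : ModuleCat.{u} R}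
    (P : ProjectiveResolution J) {n : ℕ} (hn : ∀ i, n < i → IsZero (P.complex.X i)) :
    (((tensorRight J).mapHomologicalComplex _).obj T).Acyclic := by
  have hsurj : Function.Surjective (P.π.f 0) := (ModuleCat.epi_iff_surjective _).1 inferInstance
  have e : ModuleCat.of R (LinearMap.range (P.π.f 0).hom) ≅ J :=
    (LinearEquiv.ofTop _ (LinearMap.range_eq_top.2 hsurj)).toModuleIso ≪≫
      HomologicalComplex.singleObjXSelf (ComplexShape.down ℕ) 0 J
  have hX₁ := acyclic_tensorRight_range_d hT hflat P hn 0
  have hX₃ := acyclic_tensorRight_X₃ hT hflat P.exact₀.moduleCatImages_shortExact (P.flat_X 0) hX₁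
  exact acyclic_tensorRight_of_iso e hX₃

theorem acyclic_tensor_of_finite_projective_dimension_general
    {R : Type u} [CommRing R]
    (T : CochainComplex (ModuleCat.{u} R) ℤ)
    (hfree : ∀ i : ℤ, Module.Free R (T.X i))
    (hacyclic : ∀ i : ℤ, T.ExactAt i)
    (J : ModuleCat.{u} R) (hJ : HasFiniteProjectiveDimension J) :
    ∀ i : ℤ,
      (((tensorRight J).mapHomologicalComplex (ComplexShape.up ℤ)).obj T).ExactAt i := by
  obtain ⟨P, n, hn⟩ := hJ
  have hflat (i : ℤ) : Module.Flat R (T.X i) := have := hfree i; inferInstance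
  exact acyclic_tensorRight_of_projectiveResolution hacyclic hflat P hn

/-- **Acyclicity of the tensor product with a module of finite projective dimension.**
If `T` is a ℤ-indexed acyclic cochain complex of finitely generated free `R`-modules and
`J` is an `R`-module of finite projective dimension, then the complex `T ⊗_R J`,
obtained by applying `− ⊗_R J` to `T` degreewise, is acyclic. -/
theorem acyclic_tensor_of_finite_projective_dimension
    {R : Type u} [CommRing R]
    (T : CochainComplex (ModuleCat.{u} R) ℤ)
    (hfree : ∀ i : ℤ, Module.Free R (T.X i))
    (hfin : ∀ i : ℤ, Module.Finite R (T.X i))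
    (hacyclic : ∀ i : ℤ, T.ExactAt i)
    (J : ModuleCat.{u} R) (hJ : HasFiniteProjectiveDimension J) :
    ∀ i : ℤ,
      (((tensorRight J).mapHomologicalComplex (ComplexShape.up ℤ)).obj T).ExactAt i :=
  acyclic_tensor_of_finite_projective_dimension_general T hfree hacyclic J hJ
end

section
/- Let R be a commutative ring, d ≥ 1, and X a ℤ-indexed cochain complex of finitely generated free R-modules with differential ∂. Let α : X → X[d−1] be a morphism of complexes, let t₁, …, t_d ∈ R, and for each 1 ≤ j ≤ d let λ_j be a degree −1 graded R-linear map on X (components λ_j^i : X^i → X^{i−1}) satisfying λ_j ∘ ∂ + ∂ ∘ λ_j = t_j · id_X. Define the degree-zero operator L_α = (−1)^F ∘ α ∘ λ₁ ∘ ⋯ ∘ λ_d ∘ ∂ on X, where (−1)^F is the grading operator sending a homogeneous element x to (−1)^{|x|} x, and let L_α^i denote the induced R-linear endomorphism of X^i. Then for every i ∈ ℤ the traces satisfy tr(L_α^i) ≡ tr(L_α^0) modulo the ideal (t₁, …, t_d) of R. -/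
noncomputable def gradedId {R : Type*} [CommRing R] (X : ℤ → Type*)
    [∀ i, AddCommGroup (X i)] [∀ i, Module R (X i)] :
    ∀ p q : ℤ, X p →ₗ[R] X q :=
  fun p q => if h : p = q then h ▸ (LinearMap.id : X p →ₗ[R] X p) else 0

noncomputable def gradedCompAt {R : Type*} [CommRing R] {X : ℤ → Type*}
    [∀ i, AddCommGroup (X i)] [∀ i, Module R (X i)]
    (g f : ∀ p q : ℤ, X p →ₗ[R] X q) (e : ℤ) :
    ∀ p q : ℤ, X p →ₗ[R] X q :=
  fun p q => (g (p + e) q).comp (f p (p + e))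

noncomputable def lamComp {R : Type*} [CommRing R] {X : ℤ → Type*}
    [∀ i, AddCommGroup (X i)] [∀ i, Module R (X i)]
    (lam : ℕ → ∀ p q : ℤ, X p →ₗ[R] X q) : ℕ → ∀ p q : ℤ, X p →ₗ[R] X q
  | 0 => gradedId X
  | j + 1 => gradedCompAt (lamComp lam j) (lam (j + 1)) (-1)

/-! Write `T k` for the trace of `α ∘ λ₁⋯λ_d ∘ ∂` on `X^k`. Cyclicity of the trace turns it
into the trace of `∂ ∘ α ∘ λ₁⋯λ_d` on `X^(k+1)`; moving `∂` back to the right past `α` costs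
`(-1)^(d-1)`, and past each `λ_j` costs `-1` modulo `t_j`, because `∂λ_j + λ_j∂ = t_j`. Hence
`T k ≡ -T (k+1)` modulo `(t₁, …, t_d)`, and the factor `(-1)^k` of `L_α` makes its trace constant
in `k` modulo that ideal. -/

section SModEq

variable {R M N P : Type*} [AddCommGroup M] [AddCommGroup N] [AddCommGroup P]

section Ring

variable [Ring R] [Module R M] [Module R N] {I : Ideal R}

theorem SModEq.map_smul_top {x y : M} (h : x ≡ y [SMOD I • (⊤ : Submodule R M)])
    (f : M →ₗ[R] N) : f x ≡ f y [SMOD I • (⊤ : Submodule R N)] :=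
  (h.map f).mono (Submodule.map_le_iff_le_comap.mpr (Submodule.smul_top_le_comap_smul_top I f))

theorem smodEq_apply_zero_of_add_one {U : Submodule R M} {f : ℤ → M}
    (h : ∀ k, f (k + 1) ≡ f k [SMOD U]) (i : ℤ) :
    f i ≡ f 0 [SMOD U] := by
  have hper : Function.Periodic (fun k => (Submodule.Quotient.mk (f k) : M ⧸ U)) 1 := h
  rw [SModEq.def]
  simpa only [Int.cast_id, mul_one] using hper.int_mul_eq i

end Ring

variable [CommRing R] [Module R M] [Module R N] [Module R P] {I : Ideal R}

theorem SModEq.comp_left {f f' : M →ₗ[R] N} (h : f ≡ f' [SMOD I • (⊤ : Submodule R _)])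
    (g : N →ₗ[R] P) :
    g ∘ₗ f ≡ g ∘ₗ f' [SMOD I • (⊤ : Submodule R _)] :=
  h.map_smul_top (LinearMap.llcomp R M N P g)

theorem SModEq.comp_right {g g' : N →ₗ[R] P} (h : g ≡ g' [SMOD I • (⊤ : Submodule R _)])
    (f : M →ₗ[R] N) :
    g ∘ₗ f ≡ g' ∘ₗ f [SMOD I • (⊤ : Submodule R _)] :=
  h.map_smul_top (LinearMap.lcomp R P f)

theorem SModEq.trace [Module.Free R M] [Module.Finite R M] {f g : M →ₗ[R] M}
    (h : f ≡ g [SMOD I • (⊤ : Submodule R _)]) :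
    LinearMap.trace R M f ≡ LinearMap.trace R M g [SMOD I] := by
  simpa only [Ideal.smul_eq_mul, Ideal.mul_top] using h.map_smul_top (LinearMap.trace R M)

end SModEq

section Graded

variable {R : Type*} [CommRing R] {X : ℤ → Type*} [∀ i, AddCommGroup (X i)]
  [∀ i, Module R (X i)] {I : Ideal R} (dX : ∀ p q : ℤ, X p →ₗ[R] X q)

/- The target degree is a separate variable `q` with `q = p - j`, since `X (p - ↑(j + 1))` and
`X (p - 1 - ↑j)` are different types. -/
theorem dX_comp_lamComp_smodEq {lam : ℕ → ∀ p q : ℤ, X p →ₗ[R] X q} (j : ℕ)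
    (hlam : ∀ i : ℕ, 1 ≤ i → i ≤ j → ∀ p : ℤ,
      (dX (p - 1) p).comp (lam i p (p - 1)) ≡ -(lam i (p + 1) p).comp (dX p (p + 1))
        [SMOD I • (⊤ : Submodule R _)]) (p q : ℤ) (hq : q = p - j) :
    (dX q (q + 1)).comp (lamComp lam j p q) ≡
      (-1 : R) ^ j • (lamComp lam j (p + 1) (q + 1)).comp (dX p (p + 1))
      [SMOD I • (⊤ : Submodule R _)] := by
  induction j generalizing p q with
  | zero =>
    obtain rfl : q = p := by simpa using hq
    simp [lamComp, gradedId]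
  | succ j ih =>
    have ih' := ih (fun i hi hij => hlam i hi (hij.trans j.le_succ)) (p - 1) q
      (by push_cast at hq; lia)
    rw [sub_add_cancel] at ih'
    show (dX q (q + 1)).comp ((lamComp lam j (p + -1) q).comp (lam (j + 1) p (p + -1))) ≡
      (-1 : R) ^ (j + 1) • ((lamComp lam j (p + 1 + -1) (q + 1)).comp
        (lam (j + 1) (p + 1) (p + 1 + -1))).comp (dX p (p + 1)) [SMOD I • (⊤ : Submodule R _)]
    rw [add_neg_cancel_right, ← sub_eq_add_neg]
    calc (dX q (q + 1)).comp ((lamComp lam j (p - 1) q).comp (lam (j + 1) p (p - 1)))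
        = ((dX q (q + 1)).comp (lamComp lam j (p - 1) q)).comp (lam (j + 1) p (p - 1)) := rfl
      _ ≡ ((-1 : R) ^ j • (lamComp lam j p (q + 1)).comp (dX (p - 1) p)).comp
            (lam (j + 1) p (p - 1)) [SMOD I • (⊤ : Submodule R _)] := ih'.comp_right _
      _ = (-1 : R) ^ j • (lamComp lam j p (q + 1)).comp
            ((dX (p - 1) p).comp (lam (j + 1) p (p - 1))) := by
        rw [LinearMap.smul_comp, LinearMap.comp_assoc]
      _ ≡ (-1 : R) ^ j • (lamComp lam j p (q + 1)).comp
            (-(lam (j + 1) (p + 1) p).comp (dX p (p + 1))) [SMOD I • (⊤ : Submodule R _)] :=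
        ((hlam (j + 1) (Nat.le_add_left 1 j) le_rfl p).comp_left _).smul _
      _ = (-1 : R) ^ (j + 1) • ((lamComp lam j p (q + 1)).comp
            (lam (j + 1) (p + 1) p)).comp (dX p (p + 1)) := by
        rw [LinearMap.comp_neg, LinearMap.comp_assoc, pow_succ, mul_neg_one, neg_smul, smul_neg]

noncomputable def pretrace (α Λ : ∀ p q : ℤ, X p →ₗ[R] X q) (d : ℕ) (k : ℤ) : R :=
  LinearMap.trace R (X k) ((Int.negOnePow k : ℤ) •
    ((α (k + 1 - (d : ℤ)) k).comp ((Λ (k + 1) (k + 1 - (d : ℤ))).comp (dX k (k + 1)))))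

theorem dX_comp_eq_smul_comp_dX {d : ℕ} (α : ∀ p q : ℤ, X p →ₗ[R] X q)
    (hαcomm : ∀ p : ℤ, (α (p + 1) (p + (d : ℤ))).comp (dX p (p + 1)) =
      ((-1 : R) ^ (d - 1)) •
        ((dX (p + (d : ℤ) - 1) (p + (d : ℤ))).comp (α p (p + (d : ℤ) - 1))))
    (k : ℤ) :
    (dX k (k + 1)).comp (α (k + 1 - d) k) =
      (-1 : R) ^ (d - 1) • (α (k + 1 + 1 - d) (k + 1)).comp (dX (k + 1 - d) (k + 1 + 1 - d)) := by
  have h := hαcomm (k + 1 - d)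
  rw [sub_add_cancel, add_sub_cancel_right, sub_add_eq_add_sub] at h
  rw [h, smul_smul, ← pow_add, Even.neg_one_pow ⟨d - 1, rfl⟩, one_smul]

variable [∀ i, Module.Free R (X i)] [∀ i, Module.Finite R (X i)]

theorem pretrace_add_one_smodEq {d : ℕ} (hd : 1 ≤ d) (α Λ : ∀ p q : ℤ, X p →ₗ[R] X q)
    (hαcomm : ∀ p : ℤ, (α (p + 1) (p + (d : ℤ))).comp (dX p (p + 1)) =
      ((-1 : R) ^ (d - 1)) •
        ((dX (p + (d : ℤ) - 1) (p + (d : ℤ))).comp (α p (p + (d : ℤ) - 1))))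
    (hΛ : ∀ p q : ℤ, q = p - d → (dX q (q + 1)).comp (Λ p q) ≡
      (-1 : R) ^ d • (Λ (p + 1) (q + 1)).comp (dX p (p + 1)) [SMOD I • (⊤ : Submodule R _)])
    (k : ℤ) : pretrace dX α Λ d (k + 1) ≡ pretrace dX α Λ d k [SMOD I] := by
  set ε := (-1 : R) ^ (d - 1)
  have hεd : ε * (-1) ^ d = -1 := by rw [← pow_add]; exact Odd.neg_one_pow ⟨d - 1, by omega⟩
  have hΛk := hΛ (k + 1) (k + 1 - d) rfl
  rw [sub_add_eq_add_sub] at hΛk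
  have hT : LinearMap.trace R (X k)
        ((α (k + 1 - d) k).comp ((Λ (k + 1) (k + 1 - d)).comp (dX k (k + 1)))) ≡
      -LinearMap.trace R (X (k + 1)) ((α (k + 1 + 1 - d) (k + 1)).comp
        ((Λ (k + 1 + 1) (k + 1 + 1 - d)).comp (dX (k + 1) (k + 1 + 1)))) [SMOD I] := calc
    _ = LinearMap.trace R (X (k + 1))
          ((dX k (k + 1)).comp ((α (k + 1 - d) k).comp (Λ (k + 1) (k + 1 - d)))) := by
      rw [← LinearMap.comp_assoc]; exact LinearMap.trace_comp_comm' _ _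
    _ = ε * LinearMap.trace R (X (k + 1)) ((α (k + 1 + 1 - d) (k + 1)).comp
          ((dX (k + 1 - d) (k + 1 + 1 - d)).comp (Λ (k + 1) (k + 1 - d)))) := by
      rw [← LinearMap.comp_assoc, dX_comp_eq_smul_comp_dX dX α hαcomm, LinearMap.smul_comp,
        LinearMap.comp_assoc, map_smul, smul_eq_mul]
    _ ≡ ε * LinearMap.trace R (X (k + 1)) ((α (k + 1 + 1 - d) (k + 1)).comp
          ((-1 : R) ^ d • (Λ (k + 1 + 1) (k + 1 + 1 - d)).comp (dX (k + 1) (k + 1 + 1))))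
          [SMOD I] := ((hΛk.comp_left _).trace).smul ε
    _ = _ := by rw [LinearMap.comp_smul, map_smul, smul_eq_mul, ← mul_assoc, hεd, neg_one_mul]
  rw [pretrace, pretrace, map_zsmul, map_zsmul, Int.negOnePow_succ, Units.val_neg, neg_smul,
    ← smul_neg]
  exact (hT.zsmul _).symm

end Graded

theorem pretrace_independent_of_degree_general
    {R : Type*} [CommRing R] (X : ℤ → Type*)
    [∀ i, AddCommGroup (X i)] [∀ i, Module R (X i)]
    [∀ i, Module.Free R (X i)] [∀ i, Module.Finite R (X i)]
    {d : ℕ} (hd : 1 ≤ d)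
    (dX : ∀ p q : ℤ, X p →ₗ[R] X q)
    (α : ∀ p q : ℤ, X p →ₗ[R] X q)
    (hαcomm : ∀ p : ℤ, (α (p + 1) (p + (d : ℤ))).comp (dX p (p + 1)) =
      ((-1 : R) ^ (d - 1)) •
        ((dX (p + (d : ℤ) - 1) (p + (d : ℤ))).comp (α p (p + (d : ℤ) - 1))))
    (t : ℕ → R) (lam : ℕ → ∀ p q : ℤ, X p →ₗ[R] X q)
    (hlam : ∀ j : ℕ, 1 ≤ j → j ≤ d → ∀ p : ℤ,
      (lam j (p + 1) p).comp (dX p (p + 1)) + (dX (p - 1) p).comp (lam j p (p - 1))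
        = t j • (LinearMap.id : X p →ₗ[R] X p)) :
    ∀ i : ℤ,
      (LinearMap.trace R (X i))
          ((Int.negOnePow i : ℤ) •
            ((α (i + 1 - (d : ℤ)) i).comp
              ((lamComp lam d (i + 1) (i + 1 - (d : ℤ))).comp (dX i (i + 1)))))
        - (LinearMap.trace R (X 0))
          ((Int.negOnePow 0 : ℤ) •
            ((α (0 + 1 - (d : ℤ)) 0).comp
              ((lamComp lam d (0 + 1) (0 + 1 - (d : ℤ))).comp (dX 0 (0 + 1)))))
        ∈ Ideal.span (t '' Set.Icc 1 d) := by
  intro i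
  have hanti : ∀ j : ℕ, 1 ≤ j → j ≤ d → ∀ p : ℤ,
      (dX (p - 1) p).comp (lam j p (p - 1)) ≡ -(lam j (p + 1) p).comp (dX p (p + 1))
        [SMOD Ideal.span (t '' Set.Icc 1 d) • (⊤ : Submodule R _)] := fun j hj hjd p => by
    rw [SModEq.sub_mem, sub_neg_eq_add, add_comm, hlam j hj hjd p]
    exact Submodule.smul_mem_smul (Ideal.subset_span ⟨j, ⟨hj, hjd⟩, rfl⟩) Submodule.mem_top
  have hΛ := dX_comp_lamComp_smodEq dX d hanti
  exact SModEq.sub_mem.mp <|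
    smodEq_apply_zero_of_add_one (pretrace_add_one_smodEq dX hd α _ hαcomm hΛ) i

/-- **Independence of the degree in the pretrace.**
Let `X` be a cochain complex of finitely generated free `R`-modules with differential
`∂` (of degree `+1`), `α : X → X[d−1]` a morphism of complexes, `t₁, …, t_d ∈ R`, and
`λ_j` degree `−1` maps with `λ_j ∘ ∂ + ∂ ∘ λ_j = t_j · id`.  Set
`L_α = (−1)^F ∘ α ∘ λ₁⋯λ_d ∘ ∂`, a degree-zero operator.  Then for every `i : ℤ` the
trace of `L_α` in degree `i` is congruent to its trace in degree `0` modulo the ideal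
`(t₁, …, t_d)`. -/
theorem pretrace_independent_of_degree
    {R : Type*} [CommRing R] (X : ℤ → Type*)
    [∀ i, AddCommGroup (X i)] [∀ i, Module R (X i)]
    [∀ i, Module.Free R (X i)] [∀ i, Module.Finite R (X i)]
    {d : ℕ} (hd : 1 ≤ d)
    (dX : ∀ p q : ℤ, X p →ₗ[R] X q)
    (hdXsupp : ∀ p q : ℤ, q ≠ p + 1 → dX p q = 0)
    (hdXsq : ∀ p : ℤ, (dX (p + 1) (p + 2)).comp (dX p (p + 1)) = 0)
    (α : ∀ p q : ℤ, X p →ₗ[R] X q)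
    (hαsupp : ∀ p q : ℤ, q ≠ p + ((d : ℤ) - 1) → α p q = 0)
    (hαcomm : ∀ p : ℤ, (α (p + 1) (p + (d : ℤ))).comp (dX p (p + 1)) =
      ((-1 : R) ^ (d - 1)) •
        ((dX (p + (d : ℤ) - 1) (p + (d : ℤ))).comp (α p (p + (d : ℤ) - 1))))
    (t : ℕ → R) (lam : ℕ → ∀ p q : ℤ, X p →ₗ[R] X q)
    (hlamsupp : ∀ (j : ℕ) (p q : ℤ), q ≠ p - 1 → lam j p q = 0)
    (hlam : ∀ j : ℕ, 1 ≤ j → j ≤ d → ∀ p : ℤ,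
      (lam j (p + 1) p).comp (dX p (p + 1)) + (dX (p - 1) p).comp (lam j p (p - 1))
        = t j • (LinearMap.id : X p →ₗ[R] X p)) :
    ∀ i : ℤ,
      (LinearMap.trace R (X i))
          ((Int.negOnePow i : ℤ) •
            ((α (i + 1 - (d : ℤ)) i).comp
              ((lamComp lam d (i + 1) (i + 1 - (d : ℤ))).comp (dX i (i + 1)))))
        - (LinearMap.trace R (X 0))
          ((Int.negOnePow 0 : ℤ) •
            ((α (0 + 1 - (d : ℤ)) 0).comp
              ((lamComp lam d (0 + 1) (0 + 1 - (d : ℤ))).comp (dX 0 (0 + 1)))))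
        ∈ Ideal.span (t '' Set.Icc 1 d) :=
  pretrace_independent_of_degree_general X hd dX α hαcomm t lam hlam
end

section
/- Let R be a commutative ring and T a ℤ-indexed acyclic cochain complex of finitely generated free R-modules with differential ∂. Let M = coker(∂^{−1} : T^{−1} → T⁰), regarded as a cochain complex concentrated in degree 0, let ρ⁰ : T⁰ → M be the canonical projection, and let i : M → T[1] be the morphism of complexes whose degree-0 component M → T¹ is the unique map satisfying i ∘ ρ⁰ = ∂⁰. Then for every ℤ-indexed acyclic cochain complex I of injective R-modules, the induced map of total Hom complexes Hom•(T[1], I) → Hom•(M, I) is a quasi-isomorphism. -/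
/-!
Put `A = T⟦1⟧` and `B = I⟦n⟧`. Exactness of `T` at `0` and `1` makes `ι⁰ : M⁰ → A⁰` injective
with image the cycles `Z⁰(A)`. Surjectivity and injectivity on homotopy classes are then the
cases `p = 0` and `p = -1` of one relative statement in the Hom complex: if `z` is a
`(p+1)`-cocycle from `A` to `B` and `y` a `p`-cochain from `M` with `δ y = ι ∘ z`, then
`z = δ x` for a `p`-cochain `x` extending `y` along `ι`. The components `xʲ` are built by
recursion in both directions from `x⁰`, an extension of `y⁰` along `ι⁰`, keeping as invariant
that `δ x = z` holds on the cycles of `Aʲ`. Going up, `zʲ - d xʲ` vanishes on `Zʲ(A) = ker d`,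
so it extends along `d : Aʲ → Aʲ⁺¹` because `B` is degreewise injective. Going down,
`zʲ ∓ xʲ⁺¹ d` lands in the cycles, hence the boundaries, of the exact complex `B`, so it lifts
along `d_B` because `A` is degreewise projective.
-/

open CategoryTheory CategoryTheory.Limits

universe u

theorem Int.exists_seq_of_forall_exists {D : ℤ → Type*} (P : ∀ i, D i → Prop)
    (r : ∀ i, D i → D (i + 1) → Prop) {x₀ : D 0} (h₀ : P 0 x₀)
    (up : ∀ i x, P i x → ∃ y, P (i + 1) y ∧ r i x y)
    (down : ∀ i y, P (i + 1) y → ∃ x, P i x ∧ r i x y) :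
    ∃ s : ∀ i, D i, s 0 = x₀ ∧ ∀ i, r i (s i) (s (i + 1)) := by
  choose succ hsucc using up
  choose pred hpred using down
  let pos : ∀ n : ℕ, {x : D n // P n x} := fun n =>
    Nat.rec ⟨x₀, h₀⟩ (fun n x => ⟨succ n x.1 x.2, (hsucc n x.1 x.2).1⟩) n
  let neg : ∀ n : ℕ, {x : D (Int.negSucc n) // P _ x} := fun n =>
    Nat.rec ⟨pred (Int.negSucc 0) x₀ h₀, (hpred (Int.negSucc 0) x₀ h₀).1⟩
      (fun n y => ⟨pred (Int.negSucc (n + 1)) y.1 y.2,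
        (hpred (Int.negSucc (n + 1)) y.1 y.2).1⟩) n
  refine ⟨fun | .ofNat n => (pos n).1 | .negSucc n => (neg n).1, rfl, ?_⟩
  rintro (n | _ | n)
  · exact (hsucc n _ _).2
  · exact (hpred _ _ _).2
  · exact (hpred _ _ _).2

theorem CochainComplex.exactAt_shift {C : Type*} [Category C] [Preadditive C]
    [CategoryWithHomology C] (K : CochainComplex C ℤ) (n i : ℤ) (h : K.ExactAt (n + i)) :
    (K⟦n⟧).ExactAt i := by
  rw [HomologicalComplex.exactAt_iff_isZero_homology] at h ⊢
  exact h.of_iso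
    (((HomologicalComplex.homologyFunctor C (ComplexShape.up ℤ) 0).shiftIso n i _ rfl).app K)

variable {R : Type u} [Ring R]

theorem ModuleCat.exists_comp_eq_of_ker_le {X Y W : ModuleCat.{u} R} [Injective W]
    (f : X ⟶ Y) (g : X ⟶ W) (h : LinearMap.ker f.hom ≤ LinearMap.ker g.hom) :
    ∃ w : Y ⟶ W, f ≫ w = g := by
  have := Module.injective_module_of_injective_object R W
  obtain ⟨w, hw⟩ := Module.Injective.extension_property R W _ _
    ((LinearMap.ker f.hom).liftQ f.hom le_rfl) (by
      rw [← LinearMap.ker_eq_bot]; exact Submodule.ker_liftQ_eq_bot _ _ _ le_rfl)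
    ((LinearMap.ker f.hom).liftQ g.hom h)
  exact ⟨ModuleCat.ofHom w, by ext x; exact LinearMap.congr_fun hw (Submodule.Quotient.mk x)⟩

theorem ModuleCat.exists_comp_eq_of_range_le {P Y W : ModuleCat.{u} R} [Module.Projective R P]
    (p : P ⟶ Y) (q : W ⟶ Y) (h : LinearMap.range p.hom ≤ LinearMap.range q.hom) :
    ∃ l : P ⟶ W, l ≫ q = p := by
  obtain ⟨l, hl⟩ := Module.projective_lifting_property q.hom.rangeRestrict
    (p.hom.codRestrict _ fun x => h ⟨x, rfl⟩) (LinearMap.surjective_rangeRestrict q.hom)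
  exact ⟨ModuleCat.ofHom l, by ext x; exact congrArg Subtype.val (LinearMap.congr_fun hl x)⟩

theorem ModuleCat.range_le_ker_iff {X Y Z : ModuleCat.{u} R} (f : X ⟶ Y) (g : Y ⟶ Z) :
    LinearMap.range f.hom ≤ LinearMap.ker g.hom ↔ f ≫ g = 0 := by
  rw [LinearMap.range_le_ker_iff, ← ModuleCat.hom_comp, ← ModuleCat.hom_zero,
    ← ModuleCat.hom_ext_iff]

theorem HomologicalComplex.range_d_eq_ker_d {K : CochainComplex (ModuleCat.{u} R) ℤ} {i j k : ℤ}
    (hK : K.ExactAt j) (hij : i + 1 = j) (hjk : j + 1 = k) :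
    LinearMap.range (K.d i j).hom = LinearMap.ker (K.d j k).hom :=
  (ShortComplex.moduleCat_exact_iff_range_eq_ker _).mp <|
    (K.exactAt_iff' i j k (by simp [← hij]) (by simp [← hjk])).mp hK

theorem HomologicalComplex.ker_d_le_ker_iff {K : CochainComplex (ModuleCat.{u} R) ℤ} {i j k : ℤ}
    (hK : K.ExactAt j) (hij : i + 1 = j) (hjk : j + 1 = k) {Y : ModuleCat.{u} R}
    (f : K.X j ⟶ Y) : LinearMap.ker (K.d j k).hom ≤ LinearMap.ker f.hom ↔ K.d i j ≫ f = 0 := by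
  rw [← range_d_eq_ker_d hK hij hjk, ModuleCat.range_le_ker_iff]

theorem ModuleCat.injective_of_surjective_of_comp_eq {X Y Z : ModuleCat.{u} R} {ρ : X ⟶ Y}
    {g : Y ⟶ Z} {d : X ⟶ Z} (hρ : Function.Surjective ρ) (h : ρ ≫ g = d)
    (hker : LinearMap.ker ρ.hom = LinearMap.ker d.hom) : Function.Injective g := by
  refine (injective_iff_map_eq_zero _).mpr fun y hy => ?_
  obtain ⟨x, rfl⟩ := hρ y
  rwa [← LinearMap.mem_ker, hker, LinearMap.mem_ker, ← h]

theorem ModuleCat.range_eq_of_surjective_of_comp_eq {X Y Z : ModuleCat.{u} R} {ρ : X ⟶ Y}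
    {g : Y ⟶ Z} {d : X ⟶ Z} (hρ : Function.Surjective ρ) (h : ρ ≫ g = d) :
    LinearMap.range g.hom = LinearMap.range d.hom := by
  rw [← h, ModuleCat.hom_comp,
    LinearMap.range_comp_of_range_eq_top _ (LinearMap.range_eq_top.mpr hρ)]

theorem CochainComplex.ker_shiftFunctor_obj_d (K : CochainComplex (ModuleCat.{u} R) ℤ)
    (n i j : ℤ) :
    LinearMap.ker ((K⟦n⟧).d i j).hom = LinearMap.ker (K.d (i + n) (j + n)).hom := by
  ext x
  change (n.negOnePow • K.d (i + n) (j + n)).hom x = 0 ↔ (K.d (i + n) (j + n)).hom x = 0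
  rcases Int.units_eq_one_or n.negOnePow with h | h
  · simp [h]
  · simp only [h, Units.neg_smul, one_smul, ModuleCat.hom_neg]
    exact neg_eq_zero

namespace CochainComplex.HomComplex.Cochain

variable {A B : CochainComplex (ModuleCat.{u} R) ℤ} {p q : ℤ} (hpq : p + 1 = q)
  (z : Cochain A B q)

def IsPrimitiveOnCycles (j : ℤ) (s : A.X j ⟶ B.X (j + p)) : Prop :=
  LinearMap.ker (A.d j (j + 1)).hom ≤
    LinearMap.ker (z.v j (j + 1 + p) (by omega) - s ≫ B.d (j + p) (j + 1 + p)).hom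

/-- The degree-`j` component of `δ p q x = z` (cf. `δ_v`) for `x` with components `s`, `s'`. -/
def IsPrimitiveAt (j : ℤ) (s : A.X j ⟶ B.X (j + p)) (s' : A.X (j + 1) ⟶ B.X (j + 1 + p)) :
    Prop :=
  s ≫ B.d (j + p) (j + 1 + p) + q.negOnePow • A.d j (j + 1) ≫ s' = z.v j (j + 1 + p) (by omega)

variable {z}

theorem d_comp_v_of_δ_eq_zero (hz : δ q (q + 1) z = 0) (j : ℤ) :
    A.d j (j + 1) ≫ z.v (j + 1) (j + 1 + 1 + p) (by omega) =
      q.negOnePow • (z.v j (j + 1 + p) (by omega) ≫ B.d (j + 1 + p) (j + 1 + 1 + p)) := by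
  have h := Cochain.congr_v hz j (j + 1 + 1 + p) (by omega)
  rw [δ_v q (q + 1) rfl z j _ _ (j + 1 + p) (j + 1) (by omega) rfl, Cochain.zero_v,
    Int.negOnePow_succ, Units.neg_smul, add_neg_eq_zero] at h
  rw [h, smul_smul, Int.units_mul_self, one_smul]

theorem exists_isPrimitiveOnCycles_zero {M : CochainComplex (ModuleCat.{u} R) ℤ} {ι : M ⟶ A}
    (hM : IsZero (M.X 1)) (hι_inj : Function.Injective (ι.f 0))
    (hι_range : LinearMap.range (ι.f 0).hom = LinearMap.ker (A.d 0 1).hom)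
    [Injective (B.X (0 + p))] {y : Cochain M B p}
    (hy : δ p q y = (Cochain.ofHom ι).comp z (zero_add q)) :
    ∃ s₀, z.IsPrimitiveOnCycles hpq 0 s₀ ∧ ι.f 0 ≫ s₀ = y.v 0 (0 + p) rfl := by
  obtain ⟨s₀, hs₀⟩ := ModuleCat.exists_comp_eq_of_ker_le (ι.f 0) (y.v 0 (0 + p) rfl)
    (by rw [LinearMap.ker_eq_bot.mpr hι_inj]; exact bot_le)
  refine ⟨s₀, ?_, hs₀⟩
  have h := Cochain.congr_v hy 0 (0 + 1 + p) (by omega)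
  rw [δ_v p q hpq y 0 _ _ (0 + p) 1 (by omega) rfl, hM.eq_of_tgt (M.d 0 1) 0, zero_comp,
    smul_zero, add_zero, Cochain.zero_cochain_comp_v, Cochain.ofHom_v] at h
  change LinearMap.ker (A.d 0 1).hom ≤ _
  rw [← hι_range, ModuleCat.range_le_ker_iff, Preadditive.comp_sub, reassoc_of% hs₀, h, sub_self]

variable {hpq}

theorem IsPrimitiveOnCycles.exists_succ {j : ℤ} (hA : A.ExactAt (j + 1)) (hz : δ q (q + 1) z = 0)
    {s : A.X j ⟶ B.X (j + p)} [Injective (B.X (j + 1 + p))] (hs : z.IsPrimitiveOnCycles hpq j s) :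
    ∃ s', z.IsPrimitiveOnCycles hpq (j + 1) s' ∧ z.IsPrimitiveAt hpq j s s' := by
  obtain ⟨t, ht⟩ := ModuleCat.exists_comp_eq_of_ker_le _ _ hs
  refine ⟨q.negOnePow • t, ?_, ?_⟩
  · rw [IsPrimitiveOnCycles, HomologicalComplex.ker_d_le_ker_iff hA rfl rfl, Preadditive.comp_sub,
      d_comp_v_of_δ_eq_zero hpq hz, Linear.units_smul_comp, Linear.comp_units_smul,
      reassoc_of% ht, Preadditive.sub_comp, Category.assoc, HomologicalComplex.d_comp_d,
      Limits.comp_zero, sub_zero, sub_self]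
  · rw [IsPrimitiveAt, Linear.comp_units_smul, smul_smul, Int.units_mul_self, one_smul, ht,
      add_sub_cancel]

theorem IsPrimitiveOnCycles.d_comp_comp_d {j : ℤ} {s' : A.X (j + 1) ⟶ B.X (j + 1 + p)}
    (hs' : z.IsPrimitiveOnCycles hpq (j + 1) s') :
    A.d j (j + 1) ≫ s' ≫ B.d (j + 1 + p) (j + 1 + 1 + p) =
      A.d j (j + 1) ≫ z.v (j + 1) (j + 1 + 1 + p) (by omega) := by
  have h := (ModuleCat.range_le_ker_iff _ _).mp
    (((ModuleCat.range_le_ker_iff _ _).mpr (A.d_comp_d j (j + 1) (j + 1 + 1))).trans hs')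
  rwa [Preadditive.comp_sub, sub_eq_zero, eq_comm] at h

theorem IsPrimitiveOnCycles.exists_pred {j : ℤ} (hB : B.ExactAt (j + 1 + p))
    (hz : δ q (q + 1) z = 0) {s' : A.X (j + 1) ⟶ B.X (j + 1 + p)} [Module.Projective R (A.X j)]
    (hs' : z.IsPrimitiveOnCycles hpq (j + 1) s') :
    ∃ s, z.IsPrimitiveOnCycles hpq j s ∧ z.IsPrimitiveAt hpq j s s' := by
  have hw : LinearMap.range (z.v j (j + 1 + p) (by omega) - q.negOnePow • A.d j (j + 1) ≫ s').hom ≤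
      LinearMap.range (B.d (j + p) (j + 1 + p)).hom := by
    rw [HomologicalComplex.range_d_eq_ker_d hB (by omega)
        (show j + 1 + p + 1 = j + 1 + 1 + p by omega),
      ModuleCat.range_le_ker_iff, Preadditive.sub_comp, Linear.units_smul_comp, Category.assoc,
      hs'.d_comp_comp_d, d_comp_v_of_δ_eq_zero hpq hz, smul_smul,
      Int.units_mul_self, one_smul, sub_self]
  obtain ⟨l, hl⟩ := ModuleCat.exists_comp_eq_of_range_le _ _ hw
  refine ⟨l, fun a ha => ?_, by rw [IsPrimitiveAt, hl, sub_add_cancel]⟩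
  simp [hl, ModuleCat.hom_comp, LinearMap.mem_ker.mp ha]

end CochainComplex.HomComplex.Cochain

namespace CochainComplex.HomComplex

variable {A B M : CochainComplex (ModuleCat.{u} R) ℤ} [∀ i, Module.Projective R (A.X i)]
  [∀ i, Injective (B.X i)]

theorem exists_δ_eq_and_ofHom_comp_eq {ι : M ⟶ A} (hA : ∀ i, A.ExactAt i)
    (hB : ∀ i, B.ExactAt i) (hM : ∀ i ≠ 0, IsZero (M.X i)) (hι_inj : Function.Injective (ι.f 0))
    (hι_range : LinearMap.range (ι.f 0).hom = LinearMap.ker (A.d 0 1).hom)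
    {p q : ℤ} (hpq : p + 1 = q) {z : Cochain A B q} (hz : δ q (q + 1) z = 0) {y : Cochain M B p}
    (hy : δ p q y = (Cochain.ofHom ι).comp z (zero_add q)) :
    ∃ x : Cochain A B p, δ p q x = z ∧ (Cochain.ofHom ι).comp x (zero_add p) = y := by
  obtain ⟨s₀, hs₀, hιs₀⟩ :=
    Cochain.exists_isPrimitiveOnCycles_zero hpq (hM 1 one_ne_zero) hι_inj hι_range hy
  obtain ⟨s, rfl, hs⟩ := Int.exists_seq_of_forall_exists (z.IsPrimitiveOnCycles hpq)
    (z.IsPrimitiveAt hpq) hs₀ (fun _ _ h => h.exists_succ (hA _) hz)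
    (fun _ _ h => h.exists_pred (hB _) hz)
  refine ⟨Cochain.mk fun j k h => s j ≫ (B.XIsoOfEq h).hom, ?_, ?_⟩
  · refine Cochain.ext _ _ fun j k hjk => ?_
    obtain rfl : k = j + 1 + p := by omega
    rw [δ_v p q hpq _ j _ hjk (j + p) (j + 1) (by omega) rfl]
    simp only [Cochain.mk_v, HomologicalComplex.XIsoOfEq_rfl, Iso.refl_hom, Category.comp_id]
    exact hs j
  · refine Cochain.ext _ _ fun j k hjk => ?_
    rw [Cochain.zero_cochain_comp_v, Cochain.ofHom_v]
    by_cases hj : j = 0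
    · subst hj
      obtain rfl : k = 0 + p := by omega
      simp only [Cochain.mk_v, HomologicalComplex.XIsoOfEq_rfl, Iso.refl_hom, Category.comp_id]
      exact hιs₀
    · exact (hM j hj).eq_of_src _ _

end CochainComplex.HomComplex

namespace CochainComplex

open HomComplex

variable {A B M : CochainComplex (ModuleCat.{u} R) ℤ} [∀ i, Module.Projective R (A.X i)]
  [∀ i, Injective (B.X i)] {ι : M ⟶ A}

theorem exists_comp_eq_of_range_eq_ker (hA : ∀ i, A.ExactAt i) (hB : ∀ i, B.ExactAt i)
    (hM : ∀ i ≠ 0, IsZero (M.X i)) (hι_inj : Function.Injective (ι.f 0))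
    (hι_range : LinearMap.range (ι.f 0).hom = LinearMap.ker (A.d 0 1).hom) (f : M ⟶ B) :
    ∃ g : A ⟶ B, ι ≫ g = f := by
  obtain ⟨x, hx, hιx⟩ := exists_δ_eq_and_ofHom_comp_eq hA hB hM hι_inj hι_range (zero_add 1)
    (δ_zero 1 2) (y := Cochain.ofHom f) (by simp)
  refine ⟨Cocycle.homOf (Cocycle.mk x 1 (zero_add 1) hx), Cochain.ofHom_injective ?_⟩
  rw [Cochain.ofHom_comp, Cocycle.cochain_ofHom_homOf_eq_coe]
  exact hιx

theorem nonempty_homotopy_of_range_eq_ker (hA : ∀ i, A.ExactAt i) (hB : ∀ i, B.ExactAt i)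
    (hM : ∀ i ≠ 0, IsZero (M.X i)) (hι_inj : Function.Injective (ι.f 0))
    (hι_range : LinearMap.range (ι.f 0).hom = LinearMap.ker (A.d 0 1).hom) {g₁ g₂ : A ⟶ B}
    (h : Homotopy (ι ≫ g₁) (ι ≫ g₂)) : Nonempty (Homotopy g₁ g₂) := by
  obtain ⟨x, hx, -⟩ := exists_δ_eq_and_ofHom_comp_eq hA hB hM hι_inj hι_range (neg_add_cancel 1)
    (z := Cochain.ofHom g₁ - Cochain.ofHom g₂) (by simp) (y := Cochain.ofHomotopy h)
    (by simp [δ_ofHomotopy, Cochain.ofHom_comp, Cochain.comp_sub])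
  exact ⟨(Cochain.equivHomotopy g₁ g₂).symm ⟨x, by rw [hx, sub_add_cancel]⟩⟩

theorem bijective_quotient_map_comp (hA : ∀ i, A.ExactAt i) (hB : ∀ i, B.ExactAt i)
    (hM : ∀ i ≠ 0, IsZero (M.X i)) (hι_inj : Function.Injective (ι.f 0))
    (hι_range : LinearMap.range (ι.f 0).hom = LinearMap.ker (A.d 0 1).hom) :
    Function.Bijective (fun g : (HomotopyCategory.quotient _ _).obj A ⟶
      (HomotopyCategory.quotient _ _).obj B => (HomotopyCategory.quotient _ _).map ι ≫ g) := by
  let Q := HomotopyCategory.quotient (ModuleCat.{u} R) (ComplexShape.up ℤ)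
  constructor
  · intro g₁ g₂ h
    obtain ⟨g₁, rfl⟩ := Q.map_surjective g₁
    obtain ⟨g₂, rfl⟩ := Q.map_surjective g₂
    dsimp only at h
    rw [← Functor.map_comp, ← Functor.map_comp] at h
    obtain ⟨h⟩ := nonempty_homotopy_of_range_eq_ker hA hB hM hι_inj hι_range
      (HomotopyCategory.homotopyOfEq _ _ h)
    exact HomotopyCategory.eq_of_homotopy _ _ h
  · intro f
    obtain ⟨f, rfl⟩ := Q.map_surjective f
    obtain ⟨g, rfl⟩ := exists_comp_eq_of_range_eq_ker hA hB hM hι_inj hι_range f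
    exact ⟨Q.map g, (Q.map_comp ι g).symm⟩

end CochainComplex

-- `Hⁿ` of `Hom•(X, I)` is `Hom(X, I⟦n⟧)` in the homotopy category, so the quasi-isomorphism is
-- stated as bijectivity of precomposition with `ι` on these groups for every `n`.
theorem precomposition_quasiIso_of_cokernel_map_general
    {R : Type u} [CommRing R]
    (T : CochainComplex (ModuleCat.{u} R) ℤ)
    (hfree : ∀ i : ℤ, Module.Free R (T.X i))
    (hacyclic : ∀ i : ℤ, T.ExactAt i)
    (M : CochainComplex (ModuleCat.{u} R) ℤ)
    (hM : ∀ i : ℤ, i ≠ 0 → IsZero (M.X i))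
    (ρ : T.X 0 ⟶ M.X 0)
    (hρsurj : Function.Surjective ρ)
    (hρker : LinearMap.ker ρ.hom = LinearMap.range (T.d (-1) 0).hom)
    (ι : M ⟶ T⟦(1 : ℤ)⟧)
    (hι : ρ ≫ ι.f 0 = T.d 0 1) :
    ∀ (I : CochainComplex (ModuleCat.{u} R) ℤ),
      (∀ i : ℤ, I.ExactAt i) → (∀ i : ℤ, Injective (I.X i)) →
      ∀ n : ℤ, Function.Bijective
        (fun g : (HomotopyCategory.quotient (ModuleCat.{u} R) (ComplexShape.up ℤ)).obj
            (T⟦(1 : ℤ)⟧) ⟶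
          (HomotopyCategory.quotient (ModuleCat.{u} R) (ComplexShape.up ℤ)).obj (I⟦n⟧) =>
          (HomotopyCategory.quotient (ModuleCat.{u} R) (ComplexShape.up ℤ)).map ι ≫ g) := by
  intro I hI hIinj n
  have : ∀ i, Module.Projective R ((T⟦(1 : ℤ)⟧).X i) := fun i =>
    have := hfree (i + 1); Module.Projective.of_free (R := R) (P := T.X (i + 1))
  have : ∀ i, Injective ((I⟦n⟧).X i) := fun i => hIinj (i + n)
  have hker : LinearMap.ker ρ.hom = LinearMap.ker (T.d 0 1).hom :=
    hρker.trans (HomologicalComplex.range_d_eq_ker_d (hacyclic 0) (by norm_num) rfl)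
  have hι_range : LinearMap.range (ι.f 0).hom = LinearMap.ker ((T⟦(1 : ℤ)⟧).d 0 1).hom := by
    rw [ModuleCat.range_eq_of_surjective_of_comp_eq hρsurj hι]
    exact (HomologicalComplex.range_d_eq_ker_d (hacyclic 1) (zero_add 1) one_add_one_eq_two).trans
      (CochainComplex.ker_shiftFunctor_obj_d T 1 0 1).symm
  exact CochainComplex.bijective_quotient_map_comp
    (fun i => CochainComplex.exactAt_shift T 1 i (hacyclic _))
    (fun i => CochainComplex.exactAt_shift I n i (hI _)) hM
    (ModuleCat.injective_of_surjective_of_comp_eq hρsurj hι hker) hι_range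

/-- **Universal property of the map from the cokernel to the shifted complex.**
Let `T` be a ℤ-indexed acyclic cochain complex of finitely generated free `R`-modules,
`M` the cokernel of `∂⁻¹ : T⁻¹ → T⁰` regarded as a complex concentrated in degree `0`
(via a surjection `ρ : T⁰ → M⁰` with kernel the image of `∂⁻¹`), and `ι : M ⟶ T⟦1⟧`
the morphism of complexes determined by `ρ ≫ ι⁰ = ∂⁰`.  Then for every acyclic cochain
complex `I` of injective `R`-modules, the induced map of total Hom complexes
`Hom•(T⟦1⟧, I) ⟶ Hom•(M, I)` is a quasi-isomorphism; equivalently, for every `n : ℤ`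
precomposition with `ι` is a bijection on homotopy classes of degree-`n` chain maps
(morphisms into `I⟦n⟧` in the homotopy category). -/
theorem precomposition_quasiIso_of_cokernel_map
    {R : Type u} [CommRing R]
    (T : CochainComplex (ModuleCat.{u} R) ℤ)
    (hfree : ∀ i : ℤ, Module.Free R (T.X i))
    (hfin : ∀ i : ℤ, Module.Finite R (T.X i))
    (hacyclic : ∀ i : ℤ, T.ExactAt i)
    (M : CochainComplex (ModuleCat.{u} R) ℤ)
    (hM : ∀ i : ℤ, i ≠ 0 → IsZero (M.X i))
    (ρ : T.X 0 ⟶ M.X 0)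
    (hρsurj : Function.Surjective ρ)
    (hρker : LinearMap.ker ρ.hom = LinearMap.range (T.d (-1) 0).hom)
    (ι : M ⟶ T⟦(1 : ℤ)⟧)
    (hι : ρ ≫ ι.f 0 = T.d 0 1) :
    ∀ (I : CochainComplex (ModuleCat.{u} R) ℤ),
      (∀ i : ℤ, I.ExactAt i) → (∀ i : ℤ, Injective (I.X i)) →
      ∀ n : ℤ, Function.Bijective
        (fun g : (HomotopyCategory.quotient (ModuleCat.{u} R) (ComplexShape.up ℤ)).obj
            (T⟦(1 : ℤ)⟧) ⟶
          (HomotopyCategory.quotient (ModuleCat.{u} R) (ComplexShape.up ℤ)).obj (I⟦n⟧) =>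
          (HomotopyCategory.quotient (ModuleCat.{u} R) (ComplexShape.up ℤ)).map ι ≫ g) :=
  precomposition_quasiIso_of_cokernel_map_general T hfree hacyclic M hM ρ hρsurj hρker ι hι
end
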